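/- For λ > 0 and l₁, l₂ ∈ ℕ₀, ∫_{-1}^1 C_{l₁}^λ(t) · C_{l₂}^{λ+1}(t) · (1-t²)^{λ+1/2} dt = δ_{l₁ l₂} · π·λ·Γ(l₁+2λ+2) / (2^{2λ+1} · l₁! · (l₁+λ) · (l₁+λ+1) · Γ(λ+1)²) − δ_{l₁-2, l₂} · π·λ·Γ(l₁+2λ) / (2^{2λ+1} · (l₁-2)! · (l₁+λ-1) · (l₁+λ) · Γ(λ+1)²), where the second term is present only if l₁ ≥ 2. -/

import Mathlib

open Real

/-- The Gegenbauer polynomial `C_l^λ(t)`, via its standard explicit formula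
(equivalent to the generating-function definition
`∑ C_l^λ(t) r^l = (1 - 2tr + r²)^(-λ)`). -/
noncomputable def gegenbauer (lam : ℝ) (l : ℕ) (t : ℝ) : ℝ :=
  ∑ k ∈ Finset.range (l / 2 + 1),
    (-1 : ℝ) ^ k * Real.Gamma (lam + l - k) /
      (Real.Gamma lam * (Nat.factorial k) * (Nat.factorial (l - 2 * k))) *
      (2 * t) ^ (l - 2 * k)

/-!
The connection formula `(l + λ) C_l^λ = λ (C_l^{λ+1} - C_{l-2}^{λ+1})` reduces the integral to
the orthogonality relations of the `C^{λ+1}` for the weight `w_{λ+1}(t) = (1 - t²)^{λ+1/2}`.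

These are proved Rodrigues-style. The derivative of `w_{ν+1} C_j^{ν+1}` is a multiple of
`w_ν C_{j+1}^ν`, so `n` integrations by parts turn `∫ C_m^μ C_n^μ w_μ` into a multiple of
`∫ (C_m^μ)^{(n)} w_{μ+n}`. The `n`-th derivative vanishes for `m < n` and is the constant
`2^n Γ(μ+n) / Γ(μ)` for `m = n`, which leaves a Beta integral; Legendre's duplication formula
then gives the norm.
-/

open Finset
open scoped Nat

lemma Real.inv_Gamma_eq_mul_inv_Gamma_add_one (s : ℝ) :
    (Gamma s)⁻¹ = s * (Gamma (s + 1))⁻¹ := by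
  rcases eq_or_ne s 0 with rfl | hs
  · simp [Real.Gamma_zero]
  · rw [Real.Gamma_add_one hs, mul_inv, ← mul_assoc, mul_inv_cancel₀ hs, one_mul]

lemma Real.inv_Gamma_sub_one (s : ℝ) : (Gamma (s - 1))⁻¹ = (s - 1) * (Gamma s)⁻¹ := by
  simpa using inv_Gamma_eq_mul_inv_Gamma_add_one (s - 1)

lemma prod_range_add_eq_Gamma_div {y : ℝ} (hy : 0 < y) (n : ℕ) :
    ∏ i ∈ range n, (y + i) = Gamma (y + n) / Gamma y := by
  induction n with
  | zero => simp [div_self (Real.Gamma_pos_of_pos hy).ne']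
  | succ n ih =>
    rw [prod_range_succ, ih, Nat.cast_succ, ← add_assoc, Real.Gamma_add_one (by positivity)]
    ring

lemma prod_range_natCast_sub_eq_factorial (n : ℕ) : ∏ i ∈ range n, ((n : ℝ) - i) = n ! := by
  rw [← prod_range_reflect, ← prod_range_add_one_eq_factorial, Nat.cast_prod]
  refine prod_congr rfl fun i hi => ?_
  rw [mem_range] at hi
  push_cast [Nat.cast_sub (show 1 ≤ n by omega), Nat.cast_sub (show i ≤ n - 1 by omega)]
  ring

lemma integral_rpow_mul_one_sub_rpow {b : ℝ} (hb : -1 < b) :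
    ∫ x in (0 : ℝ)..1, x ^ b * (1 - x) ^ b = Gamma (b + 1) ^ 2 / Gamma (2 * b + 2) := by
  have hre : 0 < ((b + 1 : ℝ) : ℂ).re := by simp; linarith
  have hbeta := Complex.Gamma_mul_Gamma_eq_betaIntegral hre hre
  have hint : Complex.betaIntegral ((b + 1 : ℝ) : ℂ) ((b + 1 : ℝ) : ℂ) =
      ((∫ x in (0 : ℝ)..1, x ^ b * (1 - x) ^ b : ℝ) : ℂ) := by
    rw [Complex.betaIntegral, ← intervalIntegral.integral_ofReal]
    refine intervalIntegral.integral_congr fun x hx => ?_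
    rw [Set.uIcc_of_le zero_le_one] at hx
    simp only [Complex.ofReal_add, Complex.ofReal_one, add_sub_cancel_right, Complex.ofReal_mul,
      Complex.ofReal_cpow hx.1, Complex.ofReal_cpow (sub_nonneg.2 hx.2), Complex.ofReal_sub]
  rw [hint, ← Complex.ofReal_add, Complex.Gamma_ofReal, Complex.Gamma_ofReal,
    ← Complex.ofReal_mul, ← Complex.ofReal_mul, Complex.ofReal_inj,
    show b + 1 + (b + 1) = 2 * b + 2 by ring] at hbeta
  rw [eq_div_iff (Real.Gamma_pos_of_pos (by linarith)).ne', sq, hbeta, mul_comm]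

lemma integral_one_sub_sq_rpow {b : ℝ} (hb : -1 < b) :
    ∫ t in (-1 : ℝ)..1, (1 - t ^ 2) ^ b = √π * Gamma (b + 1) / Gamma (b + 3 / 2) := by
  have hsub := intervalIntegral.smul_integral_comp_mul_add (a := 0) (b := 1)
    (fun t : ℝ => (1 - t ^ 2) ^ b) 2 (-1)
  have hcongr : ∫ x in (0 : ℝ)..1, (1 - (2 * x + -1) ^ 2) ^ b =
      ∫ x in (0 : ℝ)..1, (4 : ℝ) ^ b * (x ^ b * (1 - x) ^ b) := by
    refine intervalIntegral.integral_congr fun x hx => ?_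
    rw [Set.uIcc_of_le zero_le_one] at hx
    rw [show 1 - (2 * x + -1) ^ 2 = 4 * (x * (1 - x)) by ring,
      Real.mul_rpow (by norm_num) (mul_nonneg hx.1 (sub_nonneg.2 hx.2)),
      Real.mul_rpow hx.1 (sub_nonneg.2 hx.2)]
  norm_num only [hcongr, intervalIntegral.integral_const_mul,
    integral_rpow_mul_one_sub_rpow hb] at hsub
  have hdup := Real.Gamma_mul_Gamma_add_half (b + 1)
  rw [show b + 1 + 1 / 2 = b + 3 / 2 by ring, show 2 * (b + 1) = 2 * b + 2 by ring] at hdup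
  have hpow : (4 : ℝ) ^ b * 2 * 2 ^ (1 - (2 * b + 2)) = 1 := by
    rw [show (4 : ℝ) = 2 ^ (2 : ℝ) by norm_num, ← Real.rpow_mul zero_le_two,
      mul_right_comm, ← Real.rpow_add two_pos, ← Real.rpow_add_one two_ne_zero]
    ring_nf
    exact Real.rpow_zero 2
  have hG : Gamma (2 * b + 2) ≠ 0 := (Real.Gamma_pos_of_pos (by linarith)).ne'
  rw [← hsub, eq_div_iff (Real.Gamma_pos_of_pos (by linarith)).ne', smul_eq_mul,
    show 2 * (4 ^ b * (Gamma (b + 1) ^ 2 / Gamma (2 * b + 2))) * Gamma (b + 3 / 2) =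
      4 ^ b * 2 * Gamma (b + 1) / Gamma (2 * b + 2) * (Gamma (b + 1) * Gamma (b + 3 / 2)) by ring,
    hdup, div_mul_eq_mul_div, div_eq_iff hG]
  linear_combination Gamma (b + 1) * √π * Gamma (2 * b + 2) * hpow

/-- Writing `1 / (l - 2k)!` as `(Γ (l - 2k + 1))⁻¹` makes the coefficient vanish for `2k > l`
(Mathlib's `Γ` is `0` at its poles and `0⁻¹ = 0`), so sums over `k` may run over any range
containing `0, …, l / 2`. -/
noncomputable def gegenbauerCoeff (lam : ℝ) (l k : ℕ) : ℝ :=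
  (-1) ^ k * Gamma (lam + l - k) / (Gamma lam * k !) * (Gamma (l - 2 * k + 1))⁻¹

lemma gegenbauerCoeff_of_lt {lam : ℝ} {l k : ℕ} (h : l < 2 * k) :
    gegenbauerCoeff lam l k = 0 := by
  have : (l : ℝ) - 2 * k + 1 = -((2 * k - l - 1 : ℕ) : ℝ) := by
    rw [Nat.cast_sub (by omega), Nat.cast_sub (by omega)]; push_cast; ring
  simp [gegenbauerCoeff, this, Real.Gamma_neg_nat_eq_zero]

lemma gegenbauer_eq_sum (lam : ℝ) (l : ℕ) (x : ℝ) {N : ℕ} (hN : l / 2 < N) :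
    gegenbauer lam l x = ∑ k ∈ range N, gegenbauerCoeff lam l k * (2 * x) ^ (l - 2 * k) := by
  rw [← sum_subset (range_subset_range.2 (show l / 2 + 1 ≤ N by omega))]
  · refine sum_congr rfl fun k hk => ?_
    have hk : 2 * k ≤ l := by rw [mem_range] at hk; omega
    rw [gegenbauerCoeff, show (l : ℝ) - 2 * k + 1 = ((l - 2 * k : ℕ) : ℝ) + 1 by
      push_cast [hk]; ring, Real.Gamma_nat_eq_factorial]
    ring
  · intro k _ hk
    rw [gegenbauerCoeff_of_lt (by rw [mem_range] at hk; omega), zero_mul]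

lemma gegenbauerCoeff_mul_pow (lam : ℝ) (l k i : ℕ) (x : ℝ) :
    gegenbauerCoeff lam l k * (2 * x) ^ (l - 2 * k) * (2 * x) ^ i =
      gegenbauerCoeff lam l k * (2 * x) ^ (l + i - 2 * k) := by
  rcases le_or_gt (2 * k) l with h | h
  · rw [mul_assoc, ← pow_add, show l - 2 * k + i = l + i - 2 * k by omega]
  · simp [gegenbauerCoeff_of_lt h]

lemma pow_mul_gegenbauer_eq_sum (lam : ℝ) (l i : ℕ) (x : ℝ) {N : ℕ} (hN : l / 2 < N) :
    (2 * x) ^ i * gegenbauer lam l x =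
      ∑ k ∈ range N, gegenbauerCoeff lam l k * (2 * x) ^ (l + i - 2 * k) := by
  rw [gegenbauer_eq_sum lam l x hN, mul_sum]
  exact sum_congr rfl fun k _ => by rw [← gegenbauerCoeff_mul_pow]; ring

lemma continuous_gegenbauer (lam : ℝ) (l : ℕ) : Continuous (gegenbauer lam l) := by
  unfold gegenbauer; fun_prop

lemma contDiff_gegenbauer (lam : ℝ) (l : ℕ) : ContDiff ℝ ⊤ (gegenbauer lam l) := by
  unfold gegenbauer; fun_prop

lemma gegenbauer_zero {lam : ℝ} (hlam : Gamma lam ≠ 0) (x : ℝ) : gegenbauer lam 0 x = 1 := by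
  simp [gegenbauer, hlam]

lemma gegenbauer_one {lam : ℝ} (hlam : Gamma lam ≠ 0) (x : ℝ) :
    gegenbauer lam 1 x = 2 * lam * x := by
  have hlam0 : lam ≠ 0 := by rintro rfl; exact hlam Real.Gamma_zero
  simp [gegenbauer, Real.Gamma_add_one hlam0]
  field_simp

lemma gegenbauerCoeff_succ_mul {lam : ℝ} (hlam : lam ≠ 0) (l k : ℕ) :
    gegenbauerCoeff lam (l + 1) k * ((l : ℝ) + 1 - 2 * k) =
      lam * gegenbauerCoeff (lam + 1) l k := by
  have hinv : (Gamma ((l : ℝ) - 2 * k + 1))⁻¹ =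
      ((l : ℝ) + 1 - 2 * k) * (Gamma (((l + 1 : ℕ) : ℝ) - 2 * k + 1))⁻¹ := by
    rw [inv_Gamma_eq_mul_inv_Gamma_add_one]; push_cast; ring_nf
  simp only [gegenbauerCoeff, hinv, Real.Gamma_add_one hlam]
  push_cast
  rw [show lam + ((l : ℝ) + 1) - k = lam + 1 + l - k by ring]
  field_simp

lemma hasDerivAt_gegenbauer_succ {lam : ℝ} (hlam : lam ≠ 0) (l : ℕ) (x : ℝ) :
    HasDerivAt (gegenbauer lam (l + 1)) (2 * lam * gegenbauer (lam + 1) l x) x := by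
  have hsum : gegenbauer lam (l + 1) = fun t =>
      ∑ k ∈ range (l + 1), gegenbauerCoeff lam (l + 1) k * (2 * t) ^ (l + 1 - 2 * k) :=
    funext fun t => gegenbauer_eq_sum lam (l + 1) t (by omega)
  rw [hsum, gegenbauer_eq_sum (lam + 1) l x (show l / 2 < l + 1 by omega), mul_sum]
  refine (HasDerivAt.fun_sum fun k _ => (((hasDerivAt_id x).const_mul 2).pow _).const_mul _)
    |>.congr_deriv (sum_congr rfl fun k _ => ?_)
  rcases le_or_gt (2 * k) (l + 1) with h | h
  · rw [Nat.cast_sub h, show l + 1 - 2 * k - 1 = l - 2 * k by omega, id]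
    push_cast
    linear_combination 2 * (2 * x) ^ (l - 2 * k) * gegenbauerCoeff_succ_mul hlam l k
  · simp [gegenbauerCoeff_of_lt h, gegenbauerCoeff_of_lt (show l < 2 * k by omega)]

lemma iteratedDeriv_gegenbauer {mu : ℝ} (hmu : 0 < mu) {m k : ℕ} (hk : k ≤ m) :
    iteratedDeriv k (gegenbauer mu m) =
      fun x => 2 ^ k * (Gamma (mu + k) / Gamma mu) * gegenbauer (mu + k) (m - k) x := by
  induction k with
  | zero => simp [div_self (Real.Gamma_pos_of_pos hmu).ne']
  | succ k ih =>
    have hmuk : 0 < mu + k := by positivity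
    obtain ⟨j, hj⟩ : ∃ j, m - k = j + 1 := ⟨m - k - 1, by omega⟩
    rw [iteratedDeriv_succ, ih (by omega), hj]
    ext x
    rw [deriv_const_mul _ (hasDerivAt_gegenbauer_succ hmuk.ne' j x).differentiableAt,
      (hasDerivAt_gegenbauer_succ hmuk.ne' j x).deriv, show m - (k + 1) = j by omega,
      Nat.cast_succ, ← add_assoc, Real.Gamma_add_one hmuk.ne', pow_succ]
    ring

lemma iteratedDeriv_gegenbauer_of_lt {mu : ℝ} (hmu : 0 < mu) {m k : ℕ} (hk : m < k) :
    iteratedDeriv k (gegenbauer mu m) = 0 := by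
  induction k, hk using Nat.le_induction with
  | base =>
    rw [iteratedDeriv_succ, iteratedDeriv_gegenbauer hmu le_rfl, Nat.sub_self]
    simp [gegenbauer_zero (Real.Gamma_pos_of_pos (by positivity : 0 < mu + m)).ne']
    rfl
  | succ k _ ih => rw [iteratedDeriv_succ, ih, deriv_zero]

lemma hasDerivAt_iteratedDeriv_gegenbauer (mu : ℝ) (m k : ℕ) (x : ℝ) :
    HasDerivAt (iteratedDeriv k (gegenbauer mu m))
      (iteratedDeriv (k + 1) (gegenbauer mu m) x) x := by
  rw [iteratedDeriv_succ]
  exact (((contDiff_gegenbauer mu m).differentiable_iteratedDeriv k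
    (by exact_mod_cast WithTop.coe_lt_top _)) x).hasDerivAt

lemma gegenbauerCoeff_zero_connection {lam : ℝ} (hlam : 0 < lam) (n : ℕ) :
    (n + lam) * gegenbauerCoeff lam n 0 = lam * gegenbauerCoeff (lam + 1) n 0 := by
  simp only [gegenbauerCoeff, CharP.cast_eq_zero, sub_zero, Real.Gamma_add_one hlam.ne',
    show lam + 1 + n = (lam + n) + 1 by ring, Real.Gamma_add_one (by positivity : lam + n ≠ 0)]
  field_simp
  ring

lemma gegenbauerCoeff_succ_connection {lam : ℝ} (hlam : 0 < lam) {n k : ℕ} (hk : k ≤ n) :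
    (n + 2 + lam) * gegenbauerCoeff lam (n + 2) (k + 1) =
      lam * (gegenbauerCoeff (lam + 1) (n + 2) (k + 1) - gegenbauerCoeff (lam + 1) n k) := by
  have hkn : (k : ℝ) ≤ n := by exact_mod_cast hk
  have hG : Gamma (lam + 1 + ((n + 2 : ℕ) : ℝ) - ((k + 1 : ℕ) : ℝ)) =
      (lam + n + 1 - k) * Gamma (lam + n + 1 - k) := by
    rw [← Real.Gamma_add_one (by linarith)]
    push_cast
    ring_nf
  simp only [gegenbauerCoeff, hG, Real.Gamma_add_one hlam.ne', Nat.factorial_succ]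
  push_cast
  rw [show lam + (n + 2) - (k + 1) = lam + n + 1 - k by ring,
    show lam + 1 + n - k = lam + n + 1 - k by ring,
    show (n : ℝ) + 2 - 2 * (k + 1) + 1 = n - 2 * k + 1 by ring]
  field_simp
  ring

lemma gegenbauer_connection_of_lt_two {lam : ℝ} (hlam : 0 < lam) {n : ℕ} (hn : n < 2)
    (x : ℝ) :
    gegenbauer lam n x = lam / (n + lam) * gegenbauer (lam + 1) n x := by
  rw [div_mul_eq_mul_div, eq_div_iff (by positivity), mul_comm,
    gegenbauer_eq_sum lam n x (show n / 2 < 1 by omega),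
    gegenbauer_eq_sum (lam + 1) n x (show n / 2 < 1 by omega), sum_range_one, sum_range_one,
    ← mul_assoc, gegenbauerCoeff_zero_connection hlam, mul_assoc]

lemma gegenbauer_connection {lam : ℝ} (hlam : 0 < lam) (n : ℕ) (x : ℝ) :
    gegenbauer lam (n + 2) x =
      lam / ((n + 2 : ℕ) + lam) *
        (gegenbauer (lam + 1) (n + 2) x - gegenbauer (lam + 1) n x) := by
  have hN : (n + 2) / 2 < n / 2 + 2 := by omega
  rw [div_mul_eq_mul_div, eq_div_iff (by positivity), mul_comm,
    gegenbauer_eq_sum lam (n + 2) x hN, gegenbauer_eq_sum (lam + 1) (n + 2) x hN,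
    gegenbauer_eq_sum (lam + 1) n x (show n / 2 < n / 2 + 1 by omega),
    sum_range_succ' _ (n / 2 + 1), sum_range_succ' _ (n / 2 + 1), mul_add, mul_sum,
    ← mul_assoc, gegenbauerCoeff_zero_connection hlam, add_sub_right_comm, ← sum_sub_distrib]
  have hterm : ∀ k ∈ range (n / 2 + 1),
      (((n + 2 : ℕ) : ℝ) + lam) * (gegenbauerCoeff lam (n + 2) (k + 1) *
          (2 * x) ^ (n + 2 - 2 * (k + 1))) =
        lam * (gegenbauerCoeff (lam + 1) (n + 2) (k + 1) * (2 * x) ^ (n + 2 - 2 * (k + 1)) -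
          gegenbauerCoeff (lam + 1) n k * (2 * x) ^ (n - 2 * k)) := by
    intro k hk
    rw [show n + 2 - 2 * (k + 1) = n - 2 * k by omega, ← mul_assoc]
    push_cast
    rw [gegenbauerCoeff_succ_connection hlam (by rw [mem_range] at hk; omega)]
    ring
  rw [sum_congr rfl hterm, ← mul_sum]
  ring

lemma gegenbauerCoeff_zero_lowering {nu : ℝ} (hnu : 0 < nu) (n : ℕ) :
    (n + 2) * (n + 2 * nu + 2) / (2 * nu) * gegenbauerCoeff nu (n + 2) 0 -
        (nu + 1) / 2 * gegenbauerCoeff (nu + 2) n 0 -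
        (2 * nu + 1) / 2 * gegenbauerCoeff (nu + 1) (n + 1) 0 = 0 := by
  simp only [gegenbauerCoeff]
  push_cast
  set g : ℝ := nu + n + 1
  rw [show nu + (n + 2) - 0 = g + 1 by ring, show nu + 2 + n - 0 = g + 1 by ring,
    show nu + 1 + (n + 1) - 0 = g + 1 by ring, show (n : ℝ) - 2 * 0 + 1 = n + 1 by ring,
    show (n : ℝ) + 1 - 2 * 0 + 1 = n + 1 + 1 by ring,
    show (n : ℝ) + 2 - 2 * 0 + 1 = n + 1 + 1 + 1 by ring,
    Real.Gamma_add_one (show (n : ℝ) + 1 + 1 ≠ 0 by positivity),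
    Real.Gamma_add_one (show (n : ℝ) + 1 ≠ 0 by positivity),
    show nu + 2 = (nu + 1) + 1 by ring, Real.Gamma_add_one (show nu + 1 ≠ 0 by positivity),
    Real.Gamma_add_one hnu.ne']
  field_simp
  ring

lemma gegenbauerCoeff_succ_lowering {nu : ℝ} (hnu : 0 < nu) {n k : ℕ} (hk : k ≤ n) :
    (n + 2) * (n + 2 * nu + 2) / (2 * nu) * gegenbauerCoeff nu (n + 2) (k + 1) -
        (nu + 1) / 2 * gegenbauerCoeff (nu + 2) n (k + 1) -
        (2 * nu + 1) / 2 * gegenbauerCoeff (nu + 1) (n + 1) (k + 1) =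
      -(2 * (nu + 1) * gegenbauerCoeff (nu + 2) n k) := by
  have hkn : (k : ℝ) ≤ n := by exact_mod_cast hk
  simp only [gegenbauerCoeff]
  push_cast
  set s : ℝ := n - 2 * k + 1
  set g : ℝ := nu + n + 1 - k with hg
  rw [show (n : ℝ) + 2 - 2 * (k + 1) + 1 = s by ring,
    show (n : ℝ) - 2 * (k + 1) + 1 = s - 1 - 1 by ring,
    show (n : ℝ) + 1 - 2 * (k + 1) + 1 = s - 1 by ring,
    show nu + (n + 2) - (k + 1) = g by ring, show nu + 2 + n - (k + 1) = g by ring,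
    show nu + 1 + (n + 1) - (k + 1) = g by ring, show nu + 2 + n - k = g + 1 by ring,
    inv_Gamma_sub_one (s - 1), inv_Gamma_sub_one,
    Real.Gamma_add_one (s := g) (ne_of_gt (by linarith)),
    show nu + 2 = (nu + 1) + 1 by ring, Real.Gamma_add_one (show nu + 1 ≠ 0 by positivity),
    Real.Gamma_add_one hnu.ne', Nat.factorial_succ]
  push_cast
  field_simp
  ring

/-- With `(C_{n+2}^ν)' = 2ν C_{n+1}^{ν+1}` and `(C_{n+1}^{ν+1})' = 2(ν+1) C_n^{ν+2}`, this is
the Gegenbauer differential equation `(1 - x²) y'' - (2ν + 1) x y' + (n + 2)(n + 2 + 2ν) y = 0`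
for `y = C_{n+2}^ν`. -/
lemma gegenbauer_lowering {nu : ℝ} (hnu : 0 < nu) (n : ℕ) (x : ℝ) :
    (1 - x ^ 2) * (2 * (nu + 1) * gegenbauer (nu + 2) n x) -
        (2 * nu + 1) * x * gegenbauer (nu + 1) (n + 1) x =
      -((n + 2) * (n + 2 * nu + 2) / (2 * nu)) * gegenbauer nu (n + 2) x := by
  have hx2 := pow_mul_gegenbauer_eq_sum (nu + 2) n 2 x (N := n / 2 + 2) (by omega)
  have hx1 := pow_mul_gegenbauer_eq_sum (nu + 1) (n + 1) 1 x (N := n / 2 + 2) (by omega)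
  have hx0 := pow_mul_gegenbauer_eq_sum nu (n + 2) 0 x (N := n / 2 + 2) (by omega)
  have hshift : ∑ k ∈ range (n / 2 + 2),
      ((n + 2) * (n + 2 * nu + 2) / (2 * nu) * gegenbauerCoeff nu (n + 2) k -
        (nu + 1) / 2 * gegenbauerCoeff (nu + 2) n k -
        (2 * nu + 1) / 2 * gegenbauerCoeff (nu + 1) (n + 1) k) * (2 * x) ^ (n + 2 - 2 * k) =
      -(2 * (nu + 1) * gegenbauer (nu + 2) n x) := by
    rw [sum_range_succ', gegenbauerCoeff_zero_lowering hnu, zero_mul, add_zero,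
      gegenbauer_eq_sum (nu + 2) n x (show n / 2 < n / 2 + 1 by omega), mul_sum,
      ← sum_neg_distrib]
    refine sum_congr rfl fun k hk => ?_
    rw [gegenbauerCoeff_succ_lowering hnu (by rw [mem_range] at hk; omega),
      show n + 2 - 2 * (k + 1) = n - 2 * k by omega]
    ring
  simp only [add_zero, pow_zero, one_mul, pow_one] at hx0 hx1 hx2
  simp only [sub_mul, sum_sub_distrib, mul_assoc, ← mul_sum] at hshift
  rw [← hx0, ← hx1, ← hx2] at hshift
  linear_combination hshift

noncomputable def gegenbauerWeight (mu t : ℝ) : ℝ := (1 - t ^ 2) ^ (mu - 1 / 2)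

lemma continuous_gegenbauerWeight {mu : ℝ} (hmu : 1 / 2 ≤ mu) :
    Continuous (gegenbauerWeight mu) :=
  (continuous_const.sub (continuous_pow 2)).rpow_const fun _ => Or.inr (by linarith)

lemma gegenbauerWeight_eq_zero {mu : ℝ} (hmu : 1 / 2 < mu) {x : ℝ} (hx : x ^ 2 = 1) :
    gegenbauerWeight mu x = 0 := by
  rw [gegenbauerWeight, hx, sub_self, Real.zero_rpow (by linarith)]

lemma gegenbauerWeight_add_one {x : ℝ} (hx : x ∈ Set.Ioo (-1) 1) (nu : ℝ) :
    gegenbauerWeight (nu + 1) x = (1 - x ^ 2) * gegenbauerWeight nu x := by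
  have hpos : 0 < 1 - x ^ 2 := by nlinarith [hx.1, hx.2]
  rw [gegenbauerWeight, gegenbauerWeight, show nu + 1 - 1 / 2 = (nu - 1 / 2) + 1 by ring,
    Real.rpow_add hpos, Real.rpow_one, mul_comm]

lemma hasDerivAt_gegenbauerWeight {x : ℝ} (hx : x ∈ Set.Ioo (-1) 1) (nu : ℝ) :
    HasDerivAt (gegenbauerWeight (nu + 1)) (-(2 * nu + 1) * x * gegenbauerWeight nu x) x := by
  have hpos : 0 < 1 - x ^ 2 := by nlinarith [hx.1, hx.2]
  have h := ((hasDerivAt_pow 2 x).const_sub 1).rpow_const (p := nu + 1 - 1 / 2) (Or.inl hpos.ne')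
  refine h.congr_deriv ?_
  rw [gegenbauerWeight, show nu + 1 - 1 / 2 - 1 = nu - 1 / 2 by ring]
  push_cast
  ring

lemma integral_gegenbauerWeight {mu : ℝ} (hmu : -1 / 2 < mu) :
    ∫ t in (-1)..1, gegenbauerWeight mu t = √π * Gamma (mu + 1 / 2) / Gamma (mu + 1) := by
  rw [show mu + 1 / 2 = (mu - 1 / 2) + 1 by ring, show mu + 1 = (mu - 1 / 2) + 3 / 2 by ring]
  exact integral_one_sub_sq_rpow (by linarith)

lemma hasDerivAt_gegenbauerWeight_mul_gegenbauer {nu : ℝ} (hnu : 0 < nu) (j : ℕ) {x : ℝ}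
    (hx : x ∈ Set.Ioo (-1) 1) :
    HasDerivAt (fun t => gegenbauerWeight (nu + 1) t * gegenbauer (nu + 1) j t)
      (-((j + 1) * (j + 2 * nu + 1) / (2 * nu)) * (gegenbauerWeight nu x * gegenbauer nu (j + 1) x))
      x := by
  obtain ⟨D, hD, hlow⟩ : ∃ D, HasDerivAt (gegenbauer (nu + 1) j) D x ∧
      (1 - x ^ 2) * D - (2 * nu + 1) * x * gegenbauer (nu + 1) j x =
        -((j + 1) * (j + 2 * nu + 1) / (2 * nu)) * gegenbauer nu (j + 1) x := by
    cases j with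
    | zero =>
      have hΓ : ∀ y, 0 < y → Gamma y ≠ 0 := fun y hy => (Real.Gamma_pos_of_pos hy).ne'
      refine ⟨0, ?_, ?_⟩
      · simpa [funext (gegenbauer_zero (hΓ _ (by positivity : 0 < nu + 1)))]
          using hasDerivAt_const x (1 : ℝ)
      · rw [gegenbauer_zero (hΓ _ (by positivity)), zero_add, gegenbauer_one (hΓ _ hnu)]
        field_simp
        ring
    | succ n =>
      refine ⟨_, hasDerivAt_gegenbauer_succ (by positivity) n x, ?_⟩
      rw [show nu + 1 + 1 = nu + 2 by ring, gegenbauer_lowering hnu n x]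
      push_cast
      ring
  refine ((hasDerivAt_gegenbauerWeight hx nu).mul hD).congr_deriv ?_
  rw [gegenbauerWeight_add_one hx]
  linear_combination gegenbauerWeight nu x * hlow

lemma integral_deriv_mul_gegenbauerWeight_mul_gegenbauer {nu : ℝ} (hnu : 1 / 2 ≤ nu) (j : ℕ)
    {u u' : ℝ → ℝ} (hu : ∀ x, HasDerivAt u (u' x) x) (hu' : Continuous u') :
    ∫ t in (-1)..1, u' t * (gegenbauerWeight (nu + 1) t * gegenbauer (nu + 1) j t) =
      (j + 1) * (j + 2 * nu + 1) / (2 * nu) *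
        ∫ t in (-1)..1, u t * (gegenbauerWeight nu t * gegenbauer nu (j + 1) t) := by
  have hcont : ∀ mu, 1 / 2 ≤ mu → ∀ l,
      Continuous fun t => gegenbauerWeight mu t * gegenbauer mu l t :=
    fun mu hmu l => (continuous_gegenbauerWeight hmu).mul (continuous_gegenbauer mu l)
  have hparts := intervalIntegral.integral_mul_deriv_eq_deriv_mul_of_hasDerivAt (a := -1) (b := 1)
    (continuous_iff_continuousAt.2 fun x => (hu x).continuousAt).continuousOn
    (hcont (nu + 1) (by linarith) j).continuousOn (fun x _ => hu x)
    (fun x hx => hasDerivAt_gegenbauerWeight_mul_gegenbauer (by linarith) j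
      (by rwa [min_eq_left (by norm_num), max_eq_right (by norm_num)] at hx))
    (hu'.intervalIntegrable _ _)
    ((continuous_const.mul (hcont nu hnu (j + 1))).intervalIntegrable _ _)
  have hw : ∀ x : ℝ, x ^ 2 = 1 → gegenbauerWeight (nu + 1) x = 0 :=
    fun x => gegenbauerWeight_eq_zero (by linarith)
  simp only [hw 1 (by norm_num), hw (-1) (by norm_num), zero_mul, mul_zero, sub_zero,
    zero_sub] at hparts
  rw [← neg_eq_iff_eq_neg.2 hparts, ← intervalIntegral.integral_neg,
    ← intervalIntegral.integral_const_mul]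
  congr 1 with t
  ring

lemma integral_mul_gegenbauerWeight_mul_gegenbauer_eq_prod {mu : ℝ} (hmu : 1 / 2 ≤ mu)
    {u : ℕ → ℝ → ℝ} (hu : ∀ k x, HasDerivAt (u k) (u (k + 1) x) x) (n : ℕ) :
    ∀ k ≤ n,
      ∫ t in (-1)..1, u k t * (gegenbauerWeight (mu + k) t * gegenbauer (mu + k) (n - k) t) =
      (∏ i ∈ range k, (n - i) * (n + i + 2 * mu) / (2 * (mu + i))) *
        ∫ t in (-1)..1, u 0 t * (gegenbauerWeight mu t * gegenbauer mu n t) := by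
  intro k
  induction k with
  | zero => simp
  | succ k ih =>
    intro hk
    have hkn : ((n - (k + 1) : ℕ) : ℝ) = n - k - 1 := by push_cast [Nat.cast_sub hk]; ring
    have hcont : Continuous (u (k + 1)) :=
      continuous_iff_continuousAt.2 fun x => (hu (k + 1) x).continuousAt
    rw [prod_range_succ, mul_comm _ ((n - k : ℝ) * _ / _), mul_assoc, ← ih (by omega),
      Nat.cast_succ, ← add_assoc, integral_deriv_mul_gegenbauerWeight_mul_gegenbauer
        (by linarith [(Nat.cast_nonneg k : (0 : ℝ) ≤ k)]) (n - (k + 1)) (hu k) hcont, hkn,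
      show n - (k + 1) + 1 = n - k by omega]
    congr 1
    ring

lemma prod_range_gegenbauer_factor_eq {mu : ℝ} (hmu : 0 < mu) (n : ℕ) :
    ∏ i ∈ range n, (n - i) * (n + i + 2 * mu) / (2 * (mu + i)) =
      n ! * (Gamma (2 * (mu + n)) / Gamma (n + 2 * mu)) /
        (2 ^ n * (Gamma (mu + n) / Gamma mu)) := by
  rw [prod_div_distrib, prod_mul_distrib, prod_mul_distrib,
    prod_range_natCast_sub_eq_factorial, prod_const, card_range, prod_range_add_eq_Gamma_div hmu]
  rw [show ∏ i ∈ range n, ((n : ℝ) + i + 2 * mu) = ∏ i ∈ range n, ((n + 2 * mu) + i) from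
      prod_congr rfl fun i _ => by ring,
    prod_range_add_eq_Gamma_div (by positivity), show (n : ℝ) + 2 * mu + n = 2 * (mu + n) by ring]

lemma prod_range_gegenbauer_factor_ne_zero {mu : ℝ} (hmu : 0 < mu) (n : ℕ) :
    ∏ i ∈ range n, (n - i) * (n + i + 2 * mu) / (2 * (mu + i)) ≠ 0 :=
  prod_ne_zero_iff.2 fun i hi => by
    have : (i : ℝ) < n := by exact_mod_cast mem_range.1 hi
    have : (0 : ℝ) < n - i := by linarith
    positivity

noncomputable def gegenbauerNormSq (mu : ℝ) (n : ℕ) : ℝ :=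
  π * Gamma (n + 2 * mu) / (2 ^ (2 * mu - 1) * n ! * (n + mu) * Gamma mu ^ 2)

lemma gegenbauerNormSq_eq {mu : ℝ} (hmu : 0 < mu) (n : ℕ) :
    gegenbauerNormSq mu n =
      2 ^ n * (Gamma (mu + n) / Gamma mu) * (√π * Gamma (mu + n + 1 / 2) / Gamma (mu + n + 1)) /
        ∏ i ∈ range n, (n - i) * (n + i + 2 * mu) / (2 * (mu + i)) := by
  have hs : 0 < mu + n := by positivity
  have hdup := Real.Gamma_mul_Gamma_add_half (mu + n)
  have hpow : (2 : ℝ) ^ (1 - 2 * (mu + n)) * 2 ^ (2 * mu - 1) * (2 ^ n) ^ 2 = 1 := by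
    rw [← Real.rpow_add two_pos, ← Real.rpow_natCast, ← Real.rpow_natCast,
      ← Real.rpow_mul two_pos.le, ← Real.rpow_add two_pos]
    ring_nf
    exact Real.rpow_zero 2
  have hpi := Real.sq_sqrt Real.pi_pos.le
  have h1 := (Real.Gamma_pos_of_pos hs).ne'
  have h2 := (Real.Gamma_pos_of_pos hmu).ne'
  have h3 := (Real.Gamma_pos_of_pos (show 0 < n + 2 * mu by positivity)).ne'
  have h4 := (Real.Gamma_pos_of_pos (show 0 < 2 * (mu + n) by positivity)).ne'
  have h5 := (Real.rpow_pos_of_pos two_pos (1 - 2 * (mu + n))).ne'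
  have h6 := (Real.rpow_pos_of_pos two_pos (2 * mu - 1)).ne'
  have h7 := (Real.sqrt_pos.2 Real.pi_pos).ne'
  rw [gegenbauerNormSq, prod_range_gegenbauer_factor_eq hmu, Real.Gamma_add_one hs.ne']
  -- freeze the Gamma values and powers so that `field_simp` leaves their arguments alone
  generalize √π = r at *
  rw [← hpi]
  generalize Gamma (mu + n) = A at *
  generalize Gamma (mu + n + 1 / 2) = B at *
  generalize Gamma (2 * (mu + n)) = C at *
  generalize (2 : ℝ) ^ (1 - 2 * (mu + n)) = p at *
  generalize (2 : ℝ) ^ (2 * mu - 1) = q at *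
  field_simp
  linear_combination -(r * (mu + n) * C) * hpow - (2 ^ n) ^ 2 * q * (n + mu) * hdup

lemma integral_iteratedDeriv_gegenbauer_mul_gegenbauerWeight {mu : ℝ} (hmu : 1 / 2 ≤ mu)
    (m n : ℕ) :
    ∫ t in (-1)..1, iteratedDeriv n (gegenbauer mu m) t * gegenbauerWeight (mu + n) t =
      (∏ i ∈ range n, (n - i) * (n + i + 2 * mu) / (2 * (mu + i))) *
        ∫ t in (-1)..1, gegenbauer mu m t * gegenbauer mu n t * gegenbauerWeight mu t := by
  have hchain := integral_mul_gegenbauerWeight_mul_gegenbauer_eq_prod hmu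
    (hasDerivAt_iteratedDeriv_gegenbauer mu m) n n le_rfl
  simp only [Nat.sub_self, iteratedDeriv_zero, mul_one,
    gegenbauer_zero (Real.Gamma_pos_of_pos (by positivity : 0 < mu + n)).ne'] at hchain
  rw [hchain]
  congr 2 with t
  ring

lemma integral_gegenbauer_mul_gegenbauer_of_lt {mu : ℝ} (hmu : 1 / 2 ≤ mu) {m n : ℕ}
    (hmn : m < n) :
    ∫ t in (-1)..1, gegenbauer mu m t * gegenbauer mu n t * gegenbauerWeight mu t = 0 := by
  have h := integral_iteratedDeriv_gegenbauer_mul_gegenbauerWeight hmu m n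
  rw [iteratedDeriv_gegenbauer_of_lt (by linarith) hmn] at h
  simp only [Pi.zero_apply, zero_mul, intervalIntegral.integral_zero] at h
  exact (mul_eq_zero.1 h.symm).resolve_left (prod_range_gegenbauer_factor_ne_zero (by linarith) n)

lemma integral_gegenbauer_mul_self {mu : ℝ} (hmu : 1 / 2 ≤ mu) (n : ℕ) :
    ∫ t in (-1)..1, gegenbauer mu n t * gegenbauer mu n t * gegenbauerWeight mu t =
      gegenbauerNormSq mu n := by
  have hmu0 : 0 < mu := by linarith
  have h := integral_iteratedDeriv_gegenbauer_mul_gegenbauerWeight hmu n n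
  have hs : -1 / 2 < mu + n := by linarith [(Nat.cast_nonneg n : (0 : ℝ) ≤ n)]
  simp only [iteratedDeriv_gegenbauer hmu0 le_rfl, Nat.sub_self,
    intervalIntegral.integral_const_mul,
    gegenbauer_zero (Real.Gamma_pos_of_pos (by positivity : 0 < mu + n)).ne', mul_one,
    integral_gegenbauerWeight hs] at h
  rw [gegenbauerNormSq_eq hmu0, h,
    mul_div_cancel_left₀ _ (prod_range_gegenbauer_factor_ne_zero hmu0 n)]

theorem integral_gegenbauer_mul_gegenbauer {mu : ℝ} (hmu : 1 / 2 ≤ mu) (m n : ℕ) :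
    ∫ t in (-1)..1, gegenbauer mu m t * gegenbauer mu n t * gegenbauerWeight mu t =
      if m = n then gegenbauerNormSq mu n else 0 := by
  rcases lt_trichotomy m n with h | rfl | h
  · rw [if_neg h.ne, integral_gegenbauer_mul_gegenbauer_of_lt hmu h]
  · rw [if_pos rfl, integral_gegenbauer_mul_self hmu]
  · simp_rw [if_neg h.ne', mul_comm (gegenbauer mu m _),
      integral_gegenbauer_mul_gegenbauer_of_lt hmu h]

lemma integral_gegenbauer_mul_gegenbauer_add_one {lam : ℝ} (hlam : 0 < lam) (l₁ l₂ : ℕ) :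
    ∫ t in (-1)..1,
        gegenbauer lam l₁ t * gegenbauer (lam + 1) l₂ t * gegenbauerWeight (lam + 1) t =
      lam / (l₁ + lam) * ((if l₁ = l₂ then gegenbauerNormSq (lam + 1) l₂ else 0) -
        (if l₂ + 2 = l₁ then gegenbauerNormSq (lam + 1) l₂ else 0)) := by
  have horth := integral_gegenbauer_mul_gegenbauer (show 1 / 2 ≤ lam + 1 by linarith)
  have hint : ∀ a, IntervalIntegrable (fun t => gegenbauer (lam + 1) a t *
      gegenbauer (lam + 1) l₂ t * gegenbauerWeight (lam + 1) t) MeasureTheory.volume (-1) 1 :=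
    fun a => (((continuous_gegenbauer _ _).mul (continuous_gegenbauer _ _)).mul
      (continuous_gegenbauerWeight (by linarith))).intervalIntegrable _ _
  obtain hl | ⟨n, rfl⟩ : l₁ < 2 ∨ ∃ n, l₁ = n + 2 :=
    (lt_or_ge l₁ 2).imp_right fun h => ⟨l₁ - 2, by omega⟩
  · simp_rw [gegenbauer_connection_of_lt_two hlam hl, mul_assoc,
      intervalIntegral.integral_const_mul, ← mul_assoc, horth,
      if_neg (show ¬ l₂ + 2 = l₁ by omega), sub_zero]
  · simp_rw [gegenbauer_connection hlam, mul_assoc, intervalIntegral.integral_const_mul,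
      ← mul_assoc, sub_mul]
    rw [intervalIntegral.integral_sub (hint _) (hint _), horth, horth]
    split_ifs <;> first | rfl | omega

theorem gegenbauer_mixed_order_integral (lam : ℝ) (hlam : 0 < lam) (l₁ l₂ : ℕ) :
    ∫ t in (-1 : ℝ)..1,
        gegenbauer lam l₁ t * gegenbauer (lam + 1) l₂ t * (1 - t ^ 2) ^ (lam + 1 / 2 : ℝ) =
      (if l₁ = l₂ then
        Real.pi * lam * Real.Gamma ((l₁ : ℝ) + 2 * lam + 2) /
          ((2 : ℝ) ^ (2 * lam + 1 : ℝ) * (Nat.factorial l₁) * ((l₁ : ℝ) + lam) *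
            ((l₁ : ℝ) + lam + 1) * Real.Gamma (lam + 1) ^ 2)
      else 0) -
      (if l₂ + 2 = l₁ then
        Real.pi * lam * Real.Gamma ((l₁ : ℝ) + 2 * lam) /
          ((2 : ℝ) ^ (2 * lam + 1 : ℝ) * (Nat.factorial (l₁ - 2)) * ((l₁ : ℝ) + lam - 1) *
            ((l₁ : ℝ) + lam) * Real.Gamma (lam + 1) ^ 2)
      else 0) := by
  have hweight : ∀ t : ℝ, (1 - t ^ 2) ^ (lam + 1 / 2 : ℝ) = gegenbauerWeight (lam + 1) t :=
    fun t => by rw [gegenbauerWeight, add_sub_assoc]; norm_num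
  simp_rw [hweight]
  rw [integral_gegenbauer_mul_gegenbauer_add_one hlam, mul_sub, gegenbauerNormSq,
    show 2 * (lam + 1) - 1 = 2 * lam + 1 by ring]
  congr 1
  · split_ifs with h
    · subst h
      rw [show (l₁ : ℝ) + 2 * (lam + 1) = l₁ + 2 * lam + 2 by ring]
      field_simp
      ring
    · rw [mul_zero]
  · split_ifs with h
    · subst h
      push_cast
      rw [show (l₂ : ℝ) + 2 * (lam + 1) = l₂ + 2 + 2 * lam by ring,
        show (l₂ : ℝ) + 2 + lam - 1 = l₂ + (lam + 1) by ring]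
      field_simp
    · rw [mul_zero]
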